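/- Let ℐ ⊆ ℕ be finite and nonempty, let τ ∈ ∏_{i∈ℐ}[2^i], and let A = [τ] = {f ∈ 𝒯 : ∀ i ∈ ℐ, f(i) = τ(i)}. For every finite X ⊆ 𝒟 that is a proper cover of A there exist a nonempty J ⊆ ℐ and an (ℐ, τ, J)-spike S such that w(|J|) ≤ w(X), where w(X) is the sum of the third coordinates of the members of X; moreover S covers A. -/

import Mathlib

/-!
If some member `p` of `X` has at most `|ℐ|` indices, then `w(|I_p|) ≤ w_p`, because `w(n)` is the
least weight a 𝒟-set with `n` indices can carry. Otherwise every `p` forbids one value `t_p(n)` at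
each coordinate `n` of the nonempty set `E_p = I_p \ ℐ`, and, as `[τ]` is free outside `ℐ`, these
constraints must catch every point of the product. If `∑ w_p < W = w(|ℐ|)`, the numbers
`γ_p = w_p / W` sum to less than `1`, so each coordinate carries a probability vector giving mass at
least `γ_p` to `t_p(n)`; the union bound for the product measure gives
`1 ≤ ∑ (1 - γ_p)^{|E_p|}`. The growth of `η` makes `-log γ_p ≤ |E_p| γ_p`, hence
`(1 - γ_p)^{|E_p|} ≤ γ_p`, and summing contradicts `∑ γ_p < 1`.
-/

noncomputable section

/-- 𝒯 = ∏_{n∈ℕ} [2^n]  (the paper's index `n ∈ {1,2,…}` is the Lean index `n+1`). -/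
abbrev Tal : Type := (n : ℕ) → Fin (2 ^ (n + 1))

/-- `S_{n,τ} = {f ∈ 𝒯 : f(n) ≠ τ}`. -/
def Sset (n : ℕ) (τ : Fin (2 ^ (n + 1))) : Set Tal := {f | f n ≠ τ}

/-- The 𝒟-set `⋂_{n ∈ I} S_{n, t n}` with (nonempty, finite) index set `I`;
only the values of `t` on `I` matter. -/
def DSet (I : Finset ℕ) (t : (n : ℕ) → Fin (2 ^ (n + 1))) : Set Tal :=
  {f | ∀ n ∈ I, f n ≠ t n}

/-- `η(k) = 2^{2500 k⁴}`. -/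
def ηT (k : ℕ) : ℕ := 2 ^ (2500 * k ^ 4)

/-- `α(k) = (k+5)^{-3}`. -/
def αT (k : ℕ) : ℝ := (((k : ℝ) + 5) ^ 3)⁻¹

/-- `δ(m) = min {n ∈ ℕ : η(n) ≥ m}` (with `ℕ = {1,2,…}`). -/
def δT (m : ℕ) : ℕ := sInf {n : ℕ | 1 ≤ n ∧ m ≤ ηT n}

/-- `w(n) = 2^{-δ(n)} (η(δ(n))/n)^{α(δ(n))}`. -/
def wT (n : ℕ) : ℝ :=
  (2 : ℝ) ^ (-(δT n : ℤ)) * ((ηT (δT n) : ℝ) / (n : ℝ)) ^ (αT (δT n))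

/-- Membership in Talagrand's family 𝒟 for a triple `(X, I, w)`:  for some `k ∈ {1,2,…}`,
`X` is a 𝒟-set with index set `I`, `1 ≤ |I| ≤ η(k)`, and `w = 2^{-k}(η(k)/|I|)^{α(k)}`. -/
def memD (p : Set Tal × Finset ℕ × ℝ) : Prop :=
  ∃ k : ℕ, 1 ≤ k ∧ (∃ t : (n : ℕ) → Fin (2 ^ (n + 1)), p.1 = DSet p.2.1 t) ∧
    p.2.1.Nonempty ∧ p.2.1.card ≤ ηT k ∧
    p.2.2 = (2 : ℝ) ^ (-(k : ℤ)) * ((ηT k : ℝ) / (p.2.1.card : ℝ)) ^ (αT k)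

/-- Talagrand's first pathological submeasure:
`ψ(B) = inf { w(Y) : Y ⊆ 𝒟 finite, B ⊆ ⋃ Y }`. -/
def ψT (B : Set Tal) : ℝ :=
  sInf {r : ℝ | ∃ Y : Finset (Set Tal × Finset ℕ × ℝ), (∀ p ∈ Y, memD p) ∧
    B ⊆ (⋃ p ∈ Y, p.1) ∧ r = ∑ p ∈ Y, p.2.2}

end

open Real Finset

theorem neg_log_le_mul_of_le_half_log_two_mul {r D : ℝ} (hr : 0 < r) (hD : 1 ≤ D)
    (h : -log r ≤ log (2 * D) / 2) : -log r ≤ D * r := by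
  have hD0 : 0 < D := by linarith
  rw [log_mul two_ne_zero hD0.ne'] at h
  have hexp : log D + log r + 1 ≤ D * r := by
    simpa [exp_add, exp_log hD0, exp_log hr] using add_one_le_exp (log D + log r)
  linarith [log_two_lt_d9, log_nonneg hD]

theorem one_sub_pow_le_of_neg_log_le {r : ℝ} {e : ℕ} (hr0 : 0 < r) (hr1 : r ≤ 1)
    (h : -log r ≤ e * r) : (1 - r) ^ e ≤ r :=
  calc (1 - r) ^ e ≤ exp (-r) ^ e :=
        pow_le_pow_left₀ (sub_nonneg.2 hr1) (by linarith [add_one_le_exp (-r)]) e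
    _ = exp (-(e * r)) := by rw [← exp_nat_mul]; ring_nf
    _ ≤ exp (log r) := exp_le_exp.2 (by linarith)
    _ = r := exp_log hr0

section Covering

variable {κ ι β : Type*}

theorem exists_prob_vector_ge [Fintype β] [Nonempty β] [DecidableEq β] (P : Finset κ)
    (γ : κ → ℝ) (c : κ → β) (hγ0 : ∀ p ∈ P, 0 ≤ γ p) (hγ1 : ∑ p ∈ P, γ p ≤ 1) :
    ∃ ν : β → ℝ, (∀ v, 0 ≤ ν v) ∧ ∑ v, ν v = 1 ∧ ∀ p ∈ P, γ p ≤ ν (c p) := by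
  classical
  have hcard : (0 : ℝ) < Fintype.card β := by exact_mod_cast Fintype.card_pos
  -- each `γ p` sits on `c p`; the remaining mass is spread uniformly
  refine ⟨fun v => ∑ p ∈ P with c p = v, γ p + (1 - ∑ p ∈ P, γ p) / Fintype.card β,
    fun v => ?_, ?_, fun p hp => ?_⟩
  · exact add_nonneg (sum_nonneg fun p hp => hγ0 p (mem_filter.1 hp).1)
      (div_nonneg (by linarith) hcard.le)
  · rw [sum_add_distrib, sum_fiberwise, sum_const, card_univ, nsmul_eq_mul,
      mul_div_cancel₀ _ hcard.ne']
    ring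
  · have : γ p ≤ ∑ q ∈ P with c q = c p, γ q :=
      single_le_sum (fun q hq => hγ0 q (mem_filter.1 hq).1) (mem_filter.2 ⟨hp, rfl⟩)
    exact this.trans (le_add_of_nonneg_right (div_nonneg (by linarith) hcard.le))

variable {β : ι → Type*} [∀ i, Fintype (β i)] [∀ i, DecidableEq (β i)]

theorem sum_prod_avoiding_eq [Fintype ι] [DecidableEq ι] (ν : ∀ i, β i → ℝ)
    (hν1 : ∀ i, ∑ v, ν i v = 1) (E : Finset ι) (t : ∀ i, β i) :
    ∑ g : ∀ i, β i with ∀ i ∈ E, g i ≠ t i, ∏ i, ν i (g i) = ∏ i ∈ E, (1 - ν i (t i)) := by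
  have hbox : (univ.filter fun g : ∀ i, β i => ∀ i ∈ E, g i ≠ t i) =
      Fintype.piFinset fun i => univ.filter fun v => i ∈ E → v ≠ t i := by
    ext g; simp
  have hfactor : ∀ i, ∑ v with i ∈ E → v ≠ t i, ν i v = if i ∈ E then 1 - ν i (t i) else 1 := by
    intro i
    split_ifs with hi
    · simp only [hi, true_implies, filter_ne', sum_erase_eq_sub (mem_univ _), hν1]
    · simp [hi, hν1]
  rw [hbox, ← prod_univ_sum, prod_congr rfl fun i _ => hfactor i, prod_ite_mem, univ_inter]

theorem one_le_sum_prod_of_forall_exists_avoiding [Fintype ι] [DecidableEq ι]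
    (ν : ∀ i, β i → ℝ) (hν0 : ∀ i v, 0 ≤ ν i v) (hν1 : ∀ i, ∑ v, ν i v = 1)
    (P : Finset κ) (E : κ → Finset ι) (t : κ → ∀ i, β i)
    (hcov : ∀ g : ∀ i, β i, ∃ p ∈ P, ∀ i ∈ E p, g i ≠ t p i) :
    1 ≤ ∑ p ∈ P, ∏ i ∈ E p, (1 - ν i (t p i)) := by
  classical
  have hmass : ∀ g : ∀ i, β i, 0 ≤ ∏ i, ν i (g i) := fun g => prod_nonneg fun i _ => hν0 i _
  calc (1 : ℝ) = ∑ g : ∀ i, β i, ∏ i, ν i (g i) := by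
        rw [← Fintype.prod_sum]; simp [hν1]
    _ ≤ ∑ g : ∀ i, β i, ∑ p ∈ P, if ∀ i ∈ E p, g i ≠ t p i then ∏ i, ν i (g i) else 0 := by
        refine sum_le_sum fun g _ => ?_
        obtain ⟨p, hp, hg⟩ := hcov g
        calc ∏ i, ν i (g i) = if ∀ i ∈ E p, g i ≠ t p i then ∏ i, ν i (g i) else 0 :=
              (if_pos hg).symm
          _ ≤ _ := single_le_sum (f := fun q => if ∀ i ∈ E q, g i ≠ t q i then _ else 0)
              (fun q _ => by split_ifs <;> simp [hmass]) hp
    _ = ∑ p ∈ P, ∏ i ∈ E p, (1 - ν i (t p i)) := by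
        rw [sum_comm]
        exact sum_congr rfl fun p _ => by rw [← sum_filter, sum_prod_avoiding_eq ν hν1]

theorem one_le_sum_one_sub_pow_card_of_forall_exists_avoiding [∀ i, Nonempty (β i)]
    (P : Finset κ) (E : κ → Finset ι) (t : κ → ∀ i, β i) (γ : κ → ℝ)
    (hγ0 : ∀ p ∈ P, 0 ≤ γ p) (hγ1 : ∑ p ∈ P, γ p ≤ 1)
    (hcov : ∀ g : ∀ i, β i, ∃ p ∈ P, ∀ i ∈ E p, g i ≠ t p i) :
    1 ≤ ∑ p ∈ P, (1 - γ p) ^ (E p).card := by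
  classical
  set U := P.biUnion E
  have hν : ∀ i : U, ∃ ν : β i → ℝ, (∀ v, 0 ≤ ν v) ∧ ∑ v, ν v = 1 ∧
      ∀ p ∈ P.filter (i.1 ∈ E ·), γ p ≤ ν (t p i) :=
    fun i => exists_prob_vector_ge _ γ (fun p => t p i) (fun p hp => hγ0 p (mem_filter.1 hp).1)
      ((sum_le_sum_of_subset_of_nonneg (filter_subset _ _) fun p hp _ => hγ0 p hp).trans hγ1)
  choose ν hν0 hν1 hνγ using hν
  have hcovU : ∀ g : ∀ i : U, β i, ∃ p ∈ P, ∀ i ∈ (E p).subtype (· ∈ U), g i ≠ t p i := by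
    intro g
    obtain ⟨p, hp, hg⟩ := hcov fun i => if h : i ∈ U then g ⟨i, h⟩ else Classical.arbitrary _
    exact ⟨p, hp, fun i hi => by simpa [i.2] using hg i (mem_subtype.1 hi)⟩
  refine (one_le_sum_prod_of_forall_exists_avoiding ν hν0 hν1 P _ (fun p i => t p i) hcovU).trans
    (sum_le_sum fun p hp => ?_)
  have hcard : ((E p).subtype (· ∈ U)).card = (E p).card := by
    rw [card_subtype, filter_true_of_mem]
    exact fun i hi => mem_biUnion.2 ⟨p, hp, hi⟩
  rw [← hcard, ← prod_const]
  refine prod_le_prod (fun i _ => sub_nonneg.2 ?_) fun i hi => ?_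
  · exact (hν1 i).symm ▸ single_le_sum (fun v _ => hν0 i v) (mem_univ _)
  · exact sub_le_sub_left (hνγ i p (mem_filter.2 ⟨hp, mem_subtype.1 hi⟩)) 1

end Covering

namespace Talagrand

noncomputable def weight (k n : ℕ) : ℝ := (2 : ℝ) ^ (-(k : ℤ)) * ((ηT k : ℝ) / n) ^ αT k

theorem wT_eq_weight (n : ℕ) : wT n = weight (δT n) n := rfl

theorem memD_iff {p : Set Tal × Finset ℕ × ℝ} :
    memD p ↔ ∃ k t, 1 ≤ k ∧ p.1 = DSet p.2.1 t ∧ p.2.1.Nonempty ∧ p.2.1.card ≤ ηT k ∧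
      p.2.2 = weight k p.2.1.card :=
  ⟨fun ⟨k, hk, ⟨t, ht⟩, h⟩ => ⟨k, t, hk, ht, h⟩, fun ⟨k, t, hk, ht, h⟩ => ⟨k, hk, ⟨t, ht⟩, h⟩⟩

theorem δT_le {m k : ℕ} (hk : 1 ≤ k) (h : m ≤ ηT k) : δT m ≤ k := Nat.sInf_le ⟨hk, h⟩

theorem αT_le_half (k : ℕ) : αT k ≤ 1 / 2 := by
  rw [αT, one_div]
  refine inv_anti₀ two_pos ?_
  calc (2 : ℝ) ≤ 5 ^ 3 := by norm_num
    _ ≤ (k + 5) ^ 3 := by gcongr; exact le_add_of_nonneg_left k.cast_nonneg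

theorem αT_antitone : Antitone αT := fun d k h => by
  unfold αT
  gcongr

theorem monotone_weight_exponent : Monotone fun j : ℕ => 2500 * (j : ℝ) ^ 4 * αT j - j := by
  refine monotone_nat_of_le_succ fun j => ?_
  have hstep : 1 + 2500 * (j : ℝ) ^ 4 / (j + 5) ^ 3 ≤ 2500 * (j + 1) ^ 4 / (j + 6) ^ 3 := by
    rw [one_add_div (by positivity), div_le_div_iff₀ (by positivity) (by positivity), ← sub_nonneg]
    ring_nf
    positivity
  simp only [αT, Nat.cast_succ, ← div_eq_mul_inv]
  norm_num only [add_assoc] at hstep ⊢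
  linarith

theorem weight_pos (k : ℕ) {n : ℕ} (hn : 0 < n) : 0 < weight k n := by
  unfold weight
  have : (0 : ℝ) < ηT k := by unfold ηT; positivity
  positivity

theorem log_weight (k : ℕ) {n : ℕ} (hn : 0 < n) :
    log (weight k n) = (2500 * (k : ℝ) ^ 4 * αT k - k) * log 2 - αT k * log n := by
  have hη : (0 : ℝ) < ηT k := by unfold ηT; positivity
  have hn' : (0 : ℝ) < n := by exact_mod_cast hn
  rw [weight, log_mul (by positivity) (by positivity), log_zpow, log_rpow (by positivity),
    log_div hη.ne' hn'.ne', ηT, Nat.cast_pow, log_pow]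
  push_cast
  ring

theorem log_weight_sub_log_weight_le {d k m m' : ℕ} (hdk : d ≤ k) (hm : 0 < m) (hmm' : m ≤ m') :
    log (weight d m) - log (weight k m') ≤ αT k * log ((m' : ℝ) / m) := by
  have hm' : (0 : ℝ) < m := by exact_mod_cast hm
  rw [log_weight d hm, log_weight k (hm.trans_le hmm'),
    log_div (by exact_mod_cast (hm.trans_le hmm').ne') hm'.ne']
  have hexp := monotone_weight_exponent hdk
  have hα := αT_antitone hdk
  have hlog2 : 0 < log 2 := log_pos one_lt_two
  have hlogm : 0 ≤ log m := log_natCast_nonneg m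
  simp only at hexp
  nlinarith [mul_le_mul_of_nonneg_right hexp hlog2.le, mul_le_mul_of_nonneg_right hα hlogm]

theorem weight_le_weight {d k n : ℕ} (hdk : d ≤ k) (hn : 0 < n) : weight d n ≤ weight k n := by
  have h := log_weight_sub_log_weight_le hdk hn le_rfl
  rw [div_self (by exact_mod_cast hn.ne'), log_one, mul_zero, sub_nonpos,
    log_le_log_iff (weight_pos d hn) (weight_pos k hn)] at h
  exact h

theorem wT_le_weight {n k : ℕ} (hn : 0 < n) (hk : 1 ≤ k) (h : n ≤ ηT k) : wT n ≤ weight k n :=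
  weight_le_weight (δT_le hk h) hn

theorem memD_weight_pos {p : Set Tal × Finset ℕ × ℝ} (h : memD p) : 0 < p.2.2 := by
  obtain ⟨k, -, -, -, hne, -, hw⟩ := memD_iff.1 h
  exact hw ▸ weight_pos k hne.card_pos

theorem neg_log_weight_div_wT_le {m m' k : ℕ} (hm : 0 < m) (hmm' : m < m') (hk : 1 ≤ k)
    (h : m' ≤ ηT k) : -log (weight k m' / wT m) ≤ (m' - m : ℝ) * (weight k m' / wT m) := by
  have hm0 : (0 : ℝ) < m := by exact_mod_cast hm
  have hD : (1 : ℝ) ≤ m' - m := by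
    have : (m : ℝ) + 1 ≤ m' := by exact_mod_cast hmm'
    linarith
  refine neg_log_le_mul_of_le_half_log_two_mul
    (div_pos (weight_pos k (hm.trans hmm')) (weight_pos _ hm)) hD ?_
  have hratio : (1 : ℝ) ≤ m' / m := by
    rw [one_le_div hm0]; exact_mod_cast hmm'.le
  have hratio' : (m' : ℝ) / m ≤ 2 * (m' - m) := by
    rw [div_le_iff₀ hm0]; nlinarith [hD, (by exact_mod_cast hm : (1 : ℝ) ≤ m)]
  calc -log (weight k m' / wT m)
      = log (weight (δT m) m) - log (weight k m') := by
        rw [wT_eq_weight, log_div (weight_pos k (hm.trans hmm')).ne' (weight_pos _ hm).ne']; ring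
    _ ≤ αT k * log ((m' : ℝ) / m) :=
        log_weight_sub_log_weight_le (δT_le hk (hmm'.le.trans h)) hm hmm'.le
    _ ≤ 1 / 2 * log (2 * (m' - m)) :=
        mul_le_mul (αT_le_half k) (log_le_log (by linarith) hratio') (log_nonneg hratio)
          (by norm_num)
    _ = log (2 * (m' - m)) / 2 := by ring

theorem wT_card_le_sum_of_card_lt (ℐ : Finset ℕ) (hℐ : ℐ.Nonempty)
    (τ : (n : ℕ) → Fin (2 ^ (n + 1))) (X : Finset (Set Tal × Finset ℕ × ℝ))
    (hD : ∀ p ∈ X, memD p) (hcover : {f : Tal | ∀ i ∈ ℐ, f i = τ i} ⊆ ⋃ p ∈ X, p.1)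
    (hlarge : ∀ p ∈ X, ℐ.card < p.2.1.card) :
    wT ℐ.card ≤ ∑ p ∈ X, p.2.2 := by
  classical
  by_contra! hlt
  choose! k t hk ht hne hcard hw using fun p hp => memD_iff.1 (hD p hp)
  set W := wT ℐ.card
  have hW : 0 < W := weight_pos _ hℐ.card_pos
  have hγ0 : ∀ p ∈ X, 0 < p.2.2 / W := fun p hp => div_pos (memD_weight_pos (hD p hp)) hW
  have hγ1 : ∑ p ∈ X, p.2.2 / W < 1 := by rwa [← sum_div, div_lt_one hW]
  have hcov : ∀ g : Tal, ∃ p ∈ X, ∀ n ∈ p.2.1 \ ℐ, g n ≠ t p n := by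
    intro g
    have hgτ : (fun n => if n ∈ ℐ then τ n else g n) ∈ {f : Tal | ∀ i ∈ ℐ, f i = τ i} :=
      fun i hi => if_pos hi
    obtain ⟨p, hp, hgp⟩ := Set.mem_iUnion₂.1 (hcover hgτ)
    rw [ht p hp] at hgp
    refine ⟨p, hp, fun n hn => ?_⟩
    simpa [(mem_sdiff.1 hn).2] using hgp n (mem_sdiff.1 hn).1
  have hpow : ∀ p ∈ X, (1 - p.2.2 / W) ^ (p.2.1 \ ℐ).card ≤ p.2.2 / W := by
    intro p hp
    have hr1 : p.2.2 / W ≤ 1 := (div_le_one hW).2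
      ((single_le_sum (fun q hq => (memD_weight_pos (hD q hq)).le) hp).trans hlt.le)
    have hE : (p.2.1.card : ℝ) - ℐ.card ≤ (p.2.1 \ ℐ).card := by
      rw [← Nat.cast_sub (hlarge p hp).le]
      exact_mod_cast le_card_sdiff ℐ p.2.1
    refine one_sub_pow_le_of_neg_log_le (hγ0 p hp) hr1 ?_
    have hlog := neg_log_weight_div_wT_le hℐ.card_pos (hlarge p hp) (hk p hp) (hcard p hp)
    rw [← hw p hp] at hlog
    exact hlog.trans (mul_le_mul_of_nonneg_right hE (hγ0 p hp).le)
  have hunion := one_le_sum_one_sub_pow_card_of_forall_exists_avoiding X (fun p => p.2.1 \ ℐ) t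
    (fun p => p.2.2 / W) (fun p hp => (hγ0 p hp).le) hγ1.le hcov
  linarith [sum_le_sum hpow]

end Talagrand

open Talagrand

theorem statement12_general (ℐ : Finset ℕ) (hℐ : ℐ.Nonempty)
    (τ : (n : ℕ) → Fin (2 ^ (n + 1)))
    (X : Finset (Set Tal × Finset ℕ × ℝ))
    (hD : ∀ p ∈ X, memD p)
    (hcover : {f : Tal | ∀ i ∈ ℐ, f i = τ i} ⊆ ⋃ p ∈ X, p.1) :
    ∃ J : Finset ℕ, J ⊆ ℐ ∧ J.Nonempty ∧
      ∃ t : (n : ℕ) → Fin (2 ^ (n + 1)),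
        (∀ j ∈ J, t j ≠ τ j) ∧
        wT J.card ≤ ∑ p ∈ X, p.2.2 ∧
        {f : Tal | ∀ i ∈ ℐ, f i = τ i} ⊆ DSet J t := by
  obtain ⟨m, hm, hmℐ, hmX⟩ : ∃ m, 0 < m ∧ m ≤ ℐ.card ∧ wT m ≤ ∑ p ∈ X, p.2.2 := by
    by_cases hsmall : ∃ p ∈ X, p.2.1.card ≤ ℐ.card
    · obtain ⟨p, hp, hpℐ⟩ := hsmall
      obtain ⟨k, -, hk, -, hne, hcard, hw⟩ := memD_iff.1 (hD p hp)
      refine ⟨_, hne.card_pos, hpℐ, (wT_le_weight hne.card_pos hk hcard).trans ?_⟩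
      exact hw ▸ single_le_sum (fun q hq => (memD_weight_pos (hD q hq)).le) hp
    · push Not at hsmall
      exact ⟨_, hℐ.card_pos, le_rfl, wT_card_le_sum_of_card_lt ℐ hℐ τ X hD hcover hsmall⟩
  obtain ⟨J, hJ, rfl⟩ := Finset.exists_subset_card_eq hmℐ
  choose t ht using fun n => Fintype.exists_ne_of_one_lt_card
    (by simp) (τ n)
  exact ⟨J, hJ, Finset.card_pos.1 hm, t, fun j _ => ht j, hmX,
    fun f hf j hj => by rw [hf j (hJ hj)]; exact (ht j).symm⟩

/-- For every finite `X ⊆ 𝒟` that properly covers `A = [τ]` there exist a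
nonempty `J ⊆ ℐ` and an `(ℐ, τ, J)`-spike `S = ⋂_{j∈J} S_{j,t(j)}` (with `t(j) ≠ τ(j)` on
`J`) whose weight `w(|J|)` is at most the weight of `X`; moreover `S` covers `A`. -/
theorem statement12 (ℐ : Finset ℕ) (hℐ : ℐ.Nonempty)
    (τ : (n : ℕ) → Fin (2 ^ (n + 1)))
    (X : Finset (Set Tal × Finset ℕ × ℝ))
    (hD : ∀ p ∈ X, memD p)
    (hcover : {f : Tal | ∀ i ∈ ℐ, f i = τ i} ⊆ ⋃ p ∈ X, p.1)
    (hproper : ∀ Y ⊆ X, Y ≠ X →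
      ¬ ({f : Tal | ∀ i ∈ ℐ, f i = τ i} ⊆ ⋃ p ∈ Y, p.1)) :
    ∃ J : Finset ℕ, J ⊆ ℐ ∧ J.Nonempty ∧
      ∃ t : (n : ℕ) → Fin (2 ^ (n + 1)),
        (∀ j ∈ J, t j ≠ τ j) ∧
        wT J.card ≤ ∑ p ∈ X, p.2.2 ∧
        {f : Tal | ∀ i ∈ ℐ, f i = τ i} ⊆ DSet J t :=
  statement12_general ℐ hℐ τ X hD hcover
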